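/- arXiv:1412.3606 — 3 statements merged into one kernel-verified Lean document; each statement's English description precedes it below -/
import Mathlib

section
/- Let G = ⟨a₁, b₁, a₂ | a₁b₁a₁⁻¹ = b₁⁻¹, a₂² = a₁^{2r} b₁^s, a₂ a₁^{2t} b₁^u a₂⁻¹ = b₁^{-u} a₁^{-2t}⟩. The quotient of G by the normal closure of the subgroup generated by a₁² and b₁ is isomorphic to the infinite dihedral group ℤ₂ * ℤ₂ = ⟨ā₁, ā₂ | ā₁² = ā₂² = 1⟩. -/
/-- The defining relators of the fundamental group of the sapphire `K(r,s,t,u)`: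
`a₁b₁a₁⁻¹ = b₁⁻¹`, `a₂² = a₁^{2r} b₁^s`, `a₂ a₁^{2t} b₁^u a₂⁻¹ = b₁^{-u} a₁^{-2t}`. -/
def sapphireRels (r s t u : ℤ) : Set (FreeGroup (Fin 3)) :=
  {FreeGroup.of 0 * FreeGroup.of 1 * (FreeGroup.of 0)⁻¹ * FreeGroup.of 1,
   (FreeGroup.of 2) ^ 2 * ((FreeGroup.of 0) ^ (2 * r) * (FreeGroup.of 1) ^ s)⁻¹,
   FreeGroup.of 2 * (FreeGroup.of 0) ^ (2 * t) * (FreeGroup.of 1) ^ u * (FreeGroup.of 2)⁻¹ *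
     ((FreeGroup.of 1) ^ (-u) * (FreeGroup.of 0) ^ (-(2 * t)))⁻¹}

/-- The infinite dihedral group ℤ₂ * ℤ₂ = ⟨ā₁, ā₂ ∣ ā₁² = ā₂² = 1⟩ as a presented group. -/
def infDihedralRels : Set (FreeGroup (Fin 2)) :=
  {(FreeGroup.of 0) ^ 2, (FreeGroup.of 1) ^ 2}

/-!
Sending `a₁ ↦ ā₁, b₁ ↦ 1, a₂ ↦ ā₂` maps the relators of `G` to consequences of `ā₁² = ā₂² = 1`
and kills `a₁²` and `b₁`, so it induces `G ⧸ N → ℤ₂ * ℤ₂`. Conversely `ā₁ ↦ a₁, ā₂ ↦ a₂` is well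
defined on `ℤ₂ * ℤ₂` because `a₂² = a₁^{2r} b₁^s` lies in `N`; the two maps are mutually inverse
on generators.
-/

open PresentedGroup

lemma infDihedral_of_sq (i : Fin 2) : (of i : PresentedGroup infDihedralRels) ^ 2 = 1 := by
  rw [of, ← map_pow]
  exact one_of_mem (by fin_cases i <;> simp [infDihedralRels])

namespace Sapphire

variable (r s t u : ℤ)

abbrev normalSubgroup : Subgroup (PresentedGroup (sapphireRels r s t u)) :=
  Subgroup.normalClosure {of 0 ^ 2, of 1}

variable {r s t u}

lemma of_two_sq :
    (of 2 : PresentedGroup (sapphireRels r s t u)) ^ 2 = of 0 ^ (2 * r) * of 1 ^ s := by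
  have h := mk_eq_mk_of_mul_inv_mem (rels := sapphireRels r s t u)
    (Set.mem_insert_of_mem _ (Set.mem_insert _ _))
  simp only [map_mul, map_pow, map_zpow] at h
  exact h

lemma of_zero_sq_mem :
    (of 0 : PresentedGroup (sapphireRels r s t u)) ^ 2 ∈ normalSubgroup r s t u :=
  Subgroup.subset_normalClosure (Set.mem_insert _ _)

lemma of_one_mem : (of 1 : PresentedGroup (sapphireRels r s t u)) ∈ normalSubgroup r s t u :=
  Subgroup.subset_normalClosure (Set.mem_insert_of_mem _ rfl)

lemma of_two_sq_mem :
    (of 2 : PresentedGroup (sapphireRels r s t u)) ^ 2 ∈ normalSubgroup r s t u := by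
  rw [of_two_sq, zpow_mul, zpow_ofNat]
  exact mul_mem (zpow_mem of_zero_sq_mem r) (zpow_mem of_one_mem s)

def killB : Fin 3 → PresentedGroup infDihedralRels := ![of 0, 1, of 1]

lemma lift_killB_eq_one : ∀ x ∈ sapphireRels r s t u, FreeGroup.lift killB x = 1 := by
  have h0 (k : ℤ) : (of 0 : PresentedGroup infDihedralRels) ^ (2 * k) = 1 := by
    rw [zpow_mul, zpow_ofNat, infDihedral_of_sq, one_zpow]
  rintro x (rfl | rfl | rfl) <;> simp [killB, h0, infDihedral_of_sq]

variable (r s t u) in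
def toInfDihedral : PresentedGroup (sapphireRels r s t u) →* PresentedGroup infDihedralRels :=
  toGroup lift_killB_eq_one

lemma normalSubgroup_le_ker_toInfDihedral :
    normalSubgroup r s t u ≤ (toInfDihedral r s t u).ker := by
  refine Subgroup.normalClosure_le_normal ?_
  rintro x (rfl | rfl) <;> simp [toInfDihedral, toGroup.of, killB, infDihedral_of_sq]

variable (r s t u) in
def quotientToInfDihedral :
    PresentedGroup (sapphireRels r s t u) ⧸ normalSubgroup r s t u →*
      PresentedGroup infDihedralRels :=
  QuotientGroup.lift _ (toInfDihedral r s t u) normalSubgroup_le_ker_toInfDihedral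

variable (r s t u) in
def ofInfDihedral :
    PresentedGroup infDihedralRels →*
      PresentedGroup (sapphireRels r s t u) ⧸ normalSubgroup r s t u :=
  toGroup (f := ![QuotientGroup.mk (of 0), QuotientGroup.mk (of 2)]) <| by
    rintro x (rfl | rfl) <;>
      simp [← QuotientGroup.mk_pow, QuotientGroup.eq_one_iff, of_zero_sq_mem, of_two_sq_mem]

lemma ofInfDihedral_comp_quotientToInfDihedral :
    (ofInfDihedral r s t u).comp (quotientToInfDihedral r s t u) = MonoidHom.id _ := by
  refine QuotientGroup.monoidHom_ext _ (PresentedGroup.ext fun i => ?_)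
  fin_cases i <;> simp [quotientToInfDihedral, toInfDihedral, ofInfDihedral, toGroup.of, killB,
    eq_comm (a := (1 : _ ⧸ _)), QuotientGroup.eq_one_iff, of_one_mem]

lemma quotientToInfDihedral_comp_ofInfDihedral :
    (quotientToInfDihedral r s t u).comp (ofInfDihedral r s t u) = MonoidHom.id _ := by
  refine PresentedGroup.ext fun i => ?_
  fin_cases i <;> simp [quotientToInfDihedral, toInfDihedral, ofInfDihedral, toGroup.of, killB]

end Sapphire

theorem stmt_9 (r s t u : ℤ) :
    Nonempty
      ((PresentedGroup (sapphireRels r s t u) ⧸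
        Subgroup.normalClosure
          ({(PresentedGroup.of 0 : PresentedGroup (sapphireRels r s t u)) ^ 2,
            PresentedGroup.of 1} : Set (PresentedGroup (sapphireRels r s t u)))) ≃*
        PresentedGroup infDihedralRels) :=
  ⟨MonoidHom.toMulEquiv _ _ Sapphire.ofInfDihedral_comp_quotientToInfDihedral
    Sapphire.quotientToInfDihedral_comp_ofInfDihedral⟩
end

section
/- For integers r,s,t,u with ru - st = ±1 and t ≠ 0, the abelianization of G = ⟨a₁, b₁, a₂ | a₁b₁a₁⁻¹ = b₁⁻¹, a₂² = a₁^{2r} b₁^s, a₂ a₁^{2t} b₁^u a₂⁻¹ = b₁^{-u} a₁^{-2t}⟩ is isomorphic to ℤ/(4t) ⊕ ℤ/2 ⊕ ℤ/2 if s is even, and to ℤ/(4t) ⊕ ℤ/4 if s is odd. -/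
/-!
Write the abelianization additively, with `a`, `b`, `c` the classes of `a₁`, `b₁`, `a₂`. The
relators become `2b = 0`, `2c = 2ra + sb` and `4ta + 2ub = 0`, so `4ta = 0`. If `s = 2k`, the
element `δ = c - ra - kb` satisfies `2δ = 0`, and `a, b, δ` exhibit `ℤ/4t ⊕ ℤ/2 ⊕ ℤ/2`. If
`s = 2m + 1`, then `δ = c - ra` satisfies `2δ = b`, so `b` is redundant, `4δ = 0`, and `a, δ`
exhibit `ℤ/4t ⊕ ℤ/4`. In both cases one direction of the isomorphism comes from the universal
property of the presentation and the other from the cyclic summands.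
-/

namespace PresentedGroup

variable {α : Type*} {rels : Set (FreeGroup α)}

variable (rels) in
abbrev AddAbelianization := Additive (Abelianization (PresentedGroup rels))

namespace AddAbelianization

def of (i : α) : AddAbelianization rels :=
  Additive.ofMul (Abelianization.of (PresentedGroup.of i))

theorem lift_of_eq_one :
    ∀ w ∈ rels, FreeGroup.lift (Multiplicative.ofAdd ∘ of (rels := rels)) w = 1 := by
  intro w hw
  have hmk : ∀ v, FreeGroup.lift (Multiplicative.ofAdd ∘ of (rels := rels)) v =
      Multiplicative.ofAdd (Additive.ofMul (Abelianization.of (PresentedGroup.mk rels v))) := by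
    intro v
    induction v using FreeGroup.induction_on with
    | of => rfl
    | C1 | inv_of | mul => simp_all
  rw [hmk, one_of_mem hw, map_one]
  rfl

def lift {A : Type*} [AddCommGroup A] (x : α → A)
    (hx : ∀ w ∈ rels, FreeGroup.lift (Multiplicative.ofAdd ∘ x) w = 1) :
    AddAbelianization rels →+ A :=
  MonoidHom.toAdditiveLeft (Abelianization.lift (PresentedGroup.toGroup hx))

@[simp]
theorem lift_of {A : Type*} [AddCommGroup A] (x : α → A)
    (hx : ∀ w ∈ rels, FreeGroup.lift (Multiplicative.ofAdd ∘ x) w = 1) (i : α) :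
    lift x hx (of i) = x i := by
  simp [lift, of]

@[ext]
theorem hom_ext {A : Type*} [AddGroup A] {f g : AddAbelianization rels →+ A}
    (h : ∀ i, f (of i) = g (of i)) : f = g := by
  apply MonoidHom.toAdditiveLeft.symm.injective
  exact Abelianization.hom_ext _ _ (PresentedGroup.ext fun i => h i)

end AddAbelianization

end PresentedGroup

theorem lift_sapphireRels_eq_one_iff {r s t u : ℤ} {A : Type*} [AddCommGroup A] (x : Fin 3 → A) :
    (∀ w ∈ sapphireRels r s t u, FreeGroup.lift (Multiplicative.ofAdd ∘ x) w = 1) ↔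
      2 • x 1 = 0 ∧ (2 : ℤ) • x 2 = (2 * r) • x 0 + s • x 1 ∧
        (4 * t) • x 0 + (2 * u) • x 1 = 0 := by
  simp only [sapphireRels, Set.mem_insert_iff, Set.mem_singleton_iff, forall_eq_or_imp, forall_eq,
    ← toAdd_eq_zero, map_mul, map_inv, map_pow, map_zpow, FreeGroup.lift_apply_of,
    Function.comp_apply, toAdd_mul, toAdd_inv, toAdd_pow, toAdd_zpow, toAdd_ofAdd]
  refine and_congr ?_ (and_congr ?_ ?_) <;> constructor <;> intro h <;>
    linear_combination (norm := module) h

def ZMod.zmultiplesHom (n : ℕ) {A : Type*} [AddGroup A] (a : A) (ha : n • a = 0) : ZMod n →+ A :=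
  ZMod.lift n ⟨_root_.zmultiplesHom A a, (natCast_zsmul a n).trans ha⟩

@[simp]
theorem ZMod.zmultiplesHom_intCast {n : ℕ} {A : Type*} [AddGroup A] {a : A} (ha : n • a = 0)
    (x : ℤ) : ZMod.zmultiplesHom n a ha x = x • a :=
  ZMod.lift_coe _ _ x

@[simp]
theorem ZMod.zmultiplesHom_one {n : ℕ} {A : Type*} [AddGroup A] {a : A} (ha : n • a = 0) :
    ZMod.zmultiplesHom n a ha 1 = a := by
  simpa using ZMod.zmultiplesHom_intCast ha 1

namespace Sapphire

open PresentedGroup (AddAbelianization)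
open PresentedGroup.AddAbelianization

variable (r s t u : ℤ)

theorem of_relations :
    2 • of 1 = (0 : AddAbelianization (sapphireRels r s t u)) ∧
      (2 : ℤ) • of 2 = (2 * r) • of 0 + s • (of 1 : AddAbelianization (sapphireRels r s t u)) ∧
      (4 * t) • of 0 + (2 * u) • (of 1 : AddAbelianization (sapphireRels r s t u)) = 0 :=
  (lift_sapphireRels_eq_one_iff of).1 lift_of_eq_one

theorem natAbs_four_mul_nsmul_of_zero :
    (4 * t).natAbs • (of 0 : AddAbelianization (sapphireRels r s t u)) = 0 := by
  obtain ⟨h1, -, h3⟩ := of_relations r s t u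
  rw [natAbs_nsmul_eq_zero]
  linear_combination (norm := module) h3 - u • h1

omit r s u in
theorem four_mul_intCast_eq_zero : (4 * t : ZMod (4 * t).natAbs) = 0 := by
  exact_mod_cast (ZMod.intCast_zmod_eq_zero_iff_dvd _ _).2 (Int.natAbs_dvd.2 dvd_rfl)

section Even

variable (k : ℤ)

def evenGen : Fin 3 → ZMod (4 * t).natAbs × ZMod 2 × ZMod 2 := ![(1, 0, 0), (0, 1, 0), (r, k, 1)]

theorem lift_evenGen_eq_one (hs : s = k + k) :
    ∀ w ∈ sapphireRels r s t u, FreeGroup.lift (Multiplicative.ofAdd ∘ evenGen r t k) w = 1 := by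
  rw [lift_sapphireRels_eq_one_iff]
  subst hs
  simp [evenGen, Prod.ext_iff, CharTwo.two_eq_zero, CharTwo.add_self_eq_zero,
    four_mul_intCast_eq_zero]

def evenComplement : AddAbelianization (sapphireRels r s t u) := of 2 - r • of 0 - k • of 1

theorem two_nsmul_evenComplement (hs : s = k + k) : 2 • evenComplement r s t u k = 0 := by
  obtain ⟨-, h2, -⟩ := of_relations r s t u
  subst hs
  unfold evenComplement
  linear_combination (norm := module) h2

def evenInv (hs : s = k + k) :
    ZMod (4 * t).natAbs × ZMod 2 × ZMod 2 →+ AddAbelianization (sapphireRels r s t u) :=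
  (ZMod.zmultiplesHom _ (of 0) (natAbs_four_mul_nsmul_of_zero r s t u)).coprod
    ((ZMod.zmultiplesHom 2 (of 1) (of_relations r s t u).1).coprod
      (ZMod.zmultiplesHom 2 _ (two_nsmul_evenComplement r s t u k hs)))

def evenEquiv (hs : s = k + k) :
    AddAbelianization (sapphireRels r s t u) ≃+ ZMod (4 * t).natAbs × ZMod 2 × ZMod 2 :=
  AddMonoidHom.toAddEquiv (lift (evenGen r t k) (lift_evenGen_eq_one r s t u k hs))
    (evenInv r s t u k hs)
    (hom_ext fun i => by fin_cases i <;> simp [evenGen, evenInv, evenComplement])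
    (AddMonoidHom.ext fun ⟨x, y, z⟩ => by
      obtain ⟨x, rfl⟩ := ZMod.intCast_surjective x
      obtain ⟨y, rfl⟩ := ZMod.intCast_surjective y
      obtain ⟨z, rfl⟩ := ZMod.intCast_surjective z
      simp [evenGen, evenInv, evenComplement])

end Even

section Odd

variable (m : ℤ)

def oddGen : Fin 3 → ZMod (4 * t).natAbs × ZMod 4 := ![(1, 0), (0, 2), (r, 1)]

theorem lift_oddGen_eq_one (hs : s = 2 * m + 1) :
    ∀ w ∈ sapphireRels r s t u, FreeGroup.lift (Multiplicative.ofAdd ∘ oddGen r t) w = 1 := by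
  rw [lift_sapphireRels_eq_one_iff]
  subst hs
  suffices (2 : ZMod 4) * 2 = 0 ∧ 2 = (2 * (m : ZMod 4) + 1) * 2 ∧ 2 * (u : ZMod 4) * 2 = 0 by
    simpa [oddGen, Prod.ext_iff, four_mul_intCast_eq_zero]
  have h4 : (4 : ZMod 4) = 0 := rfl
  exact ⟨by linear_combination h4, by linear_combination -(m : ZMod 4) * h4,
    by linear_combination (u : ZMod 4) * h4⟩

def oddComplement : AddAbelianization (sapphireRels r s t u) := of 2 - r • of 0

theorem two_nsmul_oddComplement (hs : s = 2 * m + 1) : 2 • oddComplement r s t u = of 1 := by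
  obtain ⟨h1, h2, -⟩ := of_relations r s t u
  subst hs
  unfold oddComplement
  linear_combination (norm := module) h2 + m • h1

theorem four_nsmul_oddComplement (hs : s = 2 * m + 1) : 4 • oddComplement r s t u = 0 := by
  rw [show 4 = 2 * 2 from rfl, mul_nsmul, two_nsmul_oddComplement r s t u m hs]
  exact (of_relations r s t u).1

def oddInv (hs : s = 2 * m + 1) :
    ZMod (4 * t).natAbs × ZMod 4 →+ AddAbelianization (sapphireRels r s t u) :=
  (ZMod.zmultiplesHom _ (of 0) (natAbs_four_mul_nsmul_of_zero r s t u)).coprod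
    (ZMod.zmultiplesHom 4 _ (four_nsmul_oddComplement r s t u m hs))

def oddEquiv (hs : s = 2 * m + 1) :
    AddAbelianization (sapphireRels r s t u) ≃+ ZMod (4 * t).natAbs × ZMod 4 :=
  AddMonoidHom.toAddEquiv (lift (oddGen r t) (lift_oddGen_eq_one r s t u m hs))
    (oddInv r s t u m hs)
    (hom_ext fun i => by
      fin_cases i
      · simp [oddGen, oddInv]
      · simpa [oddGen, oddInv] using
          (ZMod.zmultiplesHom_intCast (four_nsmul_oddComplement r s t u m hs) 2).trans
            (two_nsmul_oddComplement r s t u m hs)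
      · simp [oddGen, oddInv, oddComplement])
    (AddMonoidHom.ext fun ⟨x, y⟩ => by
      obtain ⟨x, rfl⟩ := ZMod.intCast_surjective x
      obtain ⟨y, rfl⟩ := ZMod.intCast_surjective y
      simp [oddGen, oddInv, oddComplement])

end Odd

end Sapphire

theorem stmt_11_general (r s t u : ℤ) :
    (Even s →
      Nonempty (Abelianization (PresentedGroup (sapphireRels r s t u)) ≃*
        Multiplicative (ZMod (4 * t).natAbs × ZMod 2 × ZMod 2))) ∧
    (Odd s →
      Nonempty (Abelianization (PresentedGroup (sapphireRels r s t u)) ≃*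
        Multiplicative (ZMod (4 * t).natAbs × ZMod 4))) :=
  ⟨fun ⟨k, hs⟩ => ⟨AddEquiv.toMultiplicativeRight (Sapphire.evenEquiv r s t u k hs)⟩,
    fun ⟨m, hs⟩ => ⟨AddEquiv.toMultiplicativeRight (Sapphire.oddEquiv r s t u m hs)⟩⟩

theorem stmt_11 (r s t u : ℤ) (h : r * u - s * t = 1 ∨ r * u - s * t = -1) (ht : t ≠ 0) :
    (Even s →
      Nonempty (Abelianization (PresentedGroup (sapphireRels r s t u)) ≃*
        Multiplicative (ZMod (4 * t).natAbs × ZMod 2 × ZMod 2))) ∧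
    (Odd s →
      Nonempty (Abelianization (PresentedGroup (sapphireRels r s t u)) ≃*
        Multiplicative (ZMod (4 * t).natAbs × ZMod 4))) :=
  stmt_11_general r s t u
end

section
/- Let A be a finitely generated abelian group presented as the quotient of ℤ³ with basis (a, b, c) by the relations 2b = 0, 2c = 2r·a + s·b, 4t·a + 2u·b = 0, where ru - st = ±1, t ≠ 0. If s is odd then A ≅ ℤ/(4t) ⊕ ℤ/4, and if s is even then A ≅ ℤ/(4t) ⊕ ℤ/2 ⊕ ℤ/2. -/
theorem stmt_12 (r s t u : ℤ) (h : r * u - s * t = 1 ∨ r * u - s * t = -1) (ht : t ≠ 0)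
    (H : AddSubgroup (Fin 3 → ℤ))
    (hH : H = AddSubgroup.closure
      {![0, 2, 0], ![-(2 * r), -s, 2], ![4 * t, 2 * u, 0]}) :
    (Odd s → Nonempty (((Fin 3 → ℤ) ⧸ H) ≃+ ZMod (4 * t).natAbs × ZMod 4)) ∧
    (Even s → Nonempty (((Fin 3 → ℤ) ⧸ H) ≃+ ZMod (4 * t).natAbs × ZMod 2 × ZMod 2)) := by
  subst hH
  set S : Set (Fin 3 → ℤ) := {![0, 2, 0], ![-(2 * r), -s, 2], ![4 * t, 2 * u, 0]} with hS
  have hg1 : ![0, 2, 0] ∈ AddSubgroup.closure S :=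
    AddSubgroup.subset_closure (by left; rfl)
  have hg2 : ![-(2 * r), -s, 2] ∈ AddSubgroup.closure S :=
    AddSubgroup.subset_closure (by right; left; rfl)
  have hg3 : ![4 * t, 2 * u, 0] ∈ AddSubgroup.closure S :=
    AddSubgroup.subset_closure (by right; right; rfl)
  have h4t : ((4 * t : ℤ) : ZMod (4 * t).natAbs) = 0 :=
    (ZMod.intCast_zmod_eq_zero_iff_dvd _ _).mpr (Int.natAbs_dvd.mpr dvd_rfl)
  have dvd4 : ∀ v : ℤ, (4 : ℤ) ∣ v → ((v : ℤ) : ZMod 4) = 0 := fun v hv =>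
    (ZMod.intCast_zmod_eq_zero_iff_dvd v 4).mpr (by exact_mod_cast hv)
  have dvd2 : ∀ v : ℤ, (2 : ℤ) ∣ v → ((v : ℤ) : ZMod 2) = 0 := fun v hv =>
    (ZMod.intCast_zmod_eq_zero_iff_dvd v 2).mpr (by exact_mod_cast hv)
  constructor
  · -- odd case
    intro hodd
    obtain ⟨c, hs⟩ := hodd
    let ψ : (Fin 3 → ℤ) →+ ZMod (4 * t).natAbs × ZMod 4 :=
    { toFun := fun x => (((x 0 + r * x 2 : ℤ) : ZMod (4 * t).natAbs),
        ((-(2 * x 1) - s * x 2 : ℤ) : ZMod 4))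
      map_zero' := by simp
      map_add' := by
        intro a b
        simp only [Pi.add_apply, Prod.mk_add_mk, Prod.mk.injEq]
        constructor <;> (push_cast; ring) }
    have hsurj : Function.Surjective ψ := by
      rintro ⟨a, b⟩
      obtain ⟨a', rfl⟩ := ZMod.intCast_surjective a
      obtain ⟨b', rfl⟩ := ZMod.intCast_surjective b
      refine ⟨![a' + r * s * b', 0, -(s * b')], ?_⟩
      simp only [ψ, AddMonoidHom.coe_mk, ZeroHom.coe_mk, Matrix.cons_val_zero,
        Matrix.cons_val_one, Matrix.head_cons, Matrix.cons_val_two, Matrix.tail_cons,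
        Prod.mk.injEq]
      constructor
      · congr 1; ring
      · have key : ((-(2 * (0:ℤ)) - s * -(s * b')) - b' : ℤ) = 4 * ((c * c + c) * b') := by
          linear_combination (s + 2 * c + 1) * b' * hs
        have := dvd4 _ ⟨(c * c + c) * b', key⟩
        push_cast at this ⊢
        linear_combination this
    have hker : AddSubgroup.closure S = ψ.ker := by
      apply le_antisymm
      · rw [AddSubgroup.closure_le]
        intro x hx
        simp only [hS, Set.mem_insert_iff, Set.mem_singleton_iff] at hx
        rcases hx with rfl | rfl | rfl <;>
          simp only [SetLike.mem_coe, AddMonoidHom.mem_ker, ψ, AddMonoidHom.coe_mk,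
            ZeroHom.coe_mk, Matrix.cons_val_zero, Matrix.cons_val_one, Matrix.head_cons,
            Matrix.cons_val_two, Matrix.tail_cons, Prod.mk_eq_zero]
        · exact ⟨by norm_num, by rw [show (-(2*(2:ℤ)) - s * 0 : ℤ) = -4 by ring]; exact dvd4 _ ⟨-1, by ring⟩⟩
        · exact ⟨by rw [show (-(2*r) + r * 2 : ℤ) = 0 by ring]; norm_num,
            by rw [show (-(2 * -s) - s * 2 : ℤ) = 0 by ring]; norm_num⟩
        · exact ⟨by rw [show (4*t + r * 0 : ℤ) = 4*t by ring]; exact h4t,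
            by rw [show (-(2*(2*u)) - s * 0 : ℤ) = -(4*u) by ring]; exact dvd4 _ ⟨-u, by ring⟩⟩
      · intro x hx
        simp only [AddMonoidHom.mem_ker, ψ, AddMonoidHom.coe_mk, ZeroHom.coe_mk,
          Prod.mk_eq_zero] at hx
        obtain ⟨p, hp⟩ : (4 * t : ℤ) ∣ (x 0 + r * x 2) :=
          Int.natAbs_dvd.mp ((ZMod.intCast_zmod_eq_zero_iff_dvd _ _).mp hx.1)
        obtain ⟨q, hq⟩ : (4 : ℤ) ∣ (-(2 * x 1) - s * x 2) := by
          exact_mod_cast (ZMod.intCast_zmod_eq_zero_iff_dvd _ _).mp hx.2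
        have hxv : x = ![x 0, x 1, x 2] := by
          funext i; fin_cases i <;> rfl
        have key : ![x 0, x 1, x 2] =
            (-(p * u) - q) • ![0, 2, 0] + ((x 1 + (c + 1) * x 2) + 2 * q) • ![-(2 * r), -s, 2]
              + p • ![4 * t, 2 * u, 0] := by
          funext i
          fin_cases i <;>
            simp only [Fin.isValue, Fin.reduceFinMk, Fin.mk_zero, Fin.mk_one, Pi.add_apply, Pi.smul_apply,
              smul_eq_mul, Matrix.cons_val_zero, Matrix.cons_val_one, Matrix.head_cons,
              Matrix.cons_val_two, Matrix.tail_cons, Matrix.cons_val_fin_one, Matrix.cons_val']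
          · linear_combination hp - r * hq - r * x 2 * hs
          · linear_combination -(c + 1) * hq + (x 1 + 2 * q) * hs
          · linear_combination hq + x 2 * hs
        rw [hxv, key]
        exact add_mem (add_mem (AddSubgroup.zsmul_mem _ hg1 _) (AddSubgroup.zsmul_mem _ hg2 _))
          (AddSubgroup.zsmul_mem _ hg3 _)
    exact ⟨(QuotientAddGroup.quotientAddEquivOfEq hker).trans
      (QuotientAddGroup.quotientKerEquivOfSurjective ψ hsurj)⟩
  · -- even case
    intro heven
    obtain ⟨e, hs⟩ := heven
    let ψ : (Fin 3 → ℤ) →+ ZMod (4 * t).natAbs × ZMod 2 × ZMod 2 :=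
    { toFun := fun x => (((x 0 + r * x 2 : ℤ) : ZMod (4 * t).natAbs),
        ((x 1 + e * x 2 : ℤ) : ZMod 2), ((x 2 : ℤ) : ZMod 2))
      map_zero' := by simp
      map_add' := by
        intro a b
        simp only [Pi.add_apply, Prod.mk_add_mk, Prod.mk.injEq]
        refine ⟨?_, ?_, ?_⟩ <;> (push_cast; ring) }
    have hsurj : Function.Surjective ψ := by
      rintro ⟨a, b, d⟩
      obtain ⟨a', rfl⟩ := ZMod.intCast_surjective a
      obtain ⟨b', rfl⟩ := ZMod.intCast_surjective b
      obtain ⟨d', rfl⟩ := ZMod.intCast_surjective d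
      refine ⟨![a' - r * d', b' - e * d', d'], ?_⟩
      simp only [ψ, AddMonoidHom.coe_mk, ZeroHom.coe_mk, Matrix.cons_val_zero,
        Matrix.cons_val_one, Matrix.head_cons, Matrix.cons_val_two, Matrix.tail_cons,
        Prod.mk.injEq]
      refine ⟨by congr 1; ring, by congr 1; ring, by trivial⟩
    have hker : AddSubgroup.closure S = ψ.ker := by
      apply le_antisymm
      · rw [AddSubgroup.closure_le]
        intro x hx
        simp only [hS, Set.mem_insert_iff, Set.mem_singleton_iff] at hx
        rcases hx with rfl | rfl | rfl <;>
          simp only [SetLike.mem_coe, AddMonoidHom.mem_ker, ψ, AddMonoidHom.coe_mk,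
            ZeroHom.coe_mk, Matrix.cons_val_zero, Matrix.cons_val_one, Matrix.head_cons,
            Matrix.cons_val_two, Matrix.tail_cons, Prod.mk_eq_zero]
        · exact ⟨by norm_num, dvd2 _ ⟨1, by ring⟩, dvd2 _ ⟨0, by ring⟩⟩
        · exact ⟨by rw [show (-(2*r) + r * 2 : ℤ) = 0 by ring]; norm_num,
            dvd2 _ ⟨0, by linear_combination -hs⟩, dvd2 _ ⟨1, by ring⟩⟩
        · exact ⟨by rw [show (4*t + r * 0 : ℤ) = 4*t by ring]; exact h4t,
            dvd2 _ ⟨u, by ring⟩, dvd2 _ ⟨0, by ring⟩⟩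
      · intro x hx
        simp only [AddMonoidHom.mem_ker, ψ, AddMonoidHom.coe_mk, ZeroHom.coe_mk,
          Prod.mk_eq_zero] at hx
        obtain ⟨p, hp⟩ : (4 * t : ℤ) ∣ (x 0 + r * x 2) :=
          Int.natAbs_dvd.mp ((ZMod.intCast_zmod_eq_zero_iff_dvd _ _).mp hx.1)
        obtain ⟨m, hm⟩ : (2 : ℤ) ∣ (x 1 + e * x 2) := by
          exact_mod_cast (ZMod.intCast_zmod_eq_zero_iff_dvd _ _).mp hx.2.1
        obtain ⟨q, hq⟩ : (2 : ℤ) ∣ x 2 := by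
          exact_mod_cast (ZMod.intCast_zmod_eq_zero_iff_dvd _ _).mp hx.2.2
        have hxv : x = ![x 0, x 1, x 2] := by
          funext i; fin_cases i <;> rfl
        have key : ![x 0, x 1, x 2] =
            (m - p * u) • ![0, 2, 0] + q • ![-(2 * r), -s, 2] + p • ![4 * t, 2 * u, 0] := by
          funext i
          fin_cases i <;>
            simp only [Fin.isValue, Fin.reduceFinMk, Fin.mk_zero, Fin.mk_one, Pi.add_apply, Pi.smul_apply,
              smul_eq_mul, Matrix.cons_val_zero, Matrix.cons_val_one, Matrix.head_cons,
              Matrix.cons_val_two, Matrix.tail_cons, Matrix.cons_val_fin_one, Matrix.cons_val']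
          · linear_combination hp - r * hq
          · linear_combination hm - e * hq + q * hs
          · linear_combination hq
        rw [hxv, key]
        exact add_mem (add_mem (AddSubgroup.zsmul_mem _ hg1 _) (AddSubgroup.zsmul_mem _ hg2 _))
          (AddSubgroup.zsmul_mem _ hg3 _)
    exact ⟨(QuotientAddGroup.quotientAddEquivOfEq hker).trans
      (QuotientAddGroup.quotientKerEquivOfSurjective ψ hsurj)⟩
end
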